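/- Let u ∈ L²([0,T]; H) with ∫₀ᵀ |u(s)|² ds ≤ N, and let X̄ : [0,T] → H¹₀(0,1) be a solution of the skeleton equation d X̄_t = [A X̄_t + B(X̄_t) + f̄(X̄_t) + σ₁(X̄_t)Q₁^{1/2} u(t)] dt, X̄₀ = x ∈ L²(0,1), where f̄ is Lipschitz with linear growth, and ‖σ₁(z)Q₁^{1/2}‖_{HS} ≤ C(1 + |z|). Then there is a constant C_{N,T} such that sup_{t∈[0,T]} |X̄_t|²_{L²} + ∫₀ᵀ ‖X̄_s‖²_{H¹₀} ds ≤ C_{N,T}(1 + |x|²). -/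

import Mathlib

/-!
Along the equation, `d/dt ‖X‖² = 2⟪X, A X + B X + f̄ X + σ X u⟫`: the Laplacian contributes
`-2 Vnorm(X)²`, the Burgers term cancels, and by Cauchy–Schwarz and Young the forcing terms are at
most `a (1 + ‖X‖²)` with `a = 8C(1 + ‖u‖²)`. So `w = 1 + ‖X‖²` satisfies
`w s - w r + 2 ∫_r^s Vnorm(X)² ≤ ∫_r^s a w`. Since `a` is merely integrable, Gronwall is run in
integral form by doubling: on an interval with `∫ a ≤ 1/2`, evaluating at the maximum of `w` shows
that `w` at most doubles, and `[0, T]` splits into `⌈2 ∫₀ᵀ a⌉ + 1` such intervals.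
-/

open MeasureTheory intervalIntegral RealInnerProductSpace Set

lemma MeasureTheory.IntegrableOn.intervalIntegrable_of_Icc_subset {E : Type*}
    [NormedAddCommGroup E] {f : ℝ → E} {a b r s : ℝ} (hf : IntegrableOn f (Icc a b))
    (har : a ≤ r) (hrs : r ≤ s) (hsb : s ≤ b) : IntervalIntegrable f volume r s :=
  (hf.mono_set (by rw [uIcc_of_le hrs]; exact Icc_subset_Icc har hsb)).intervalIntegrable

section Gronwall

variable {a w : ℝ → ℝ}

lemma le_two_mul_of_sub_le_integral_mul {r t : ℝ} (hrt : r ≤ t)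
    (hw : ContinuousOn w (Icc r t)) (hwr : 0 ≤ w r)
    (ha : IntegrableOn a (Icc r t)) (ha0 : ∀ s ∈ Icc r t, 0 ≤ a s)
    (hgrowth : ∀ s ∈ Icc r t, w s - w r ≤ ∫ τ in r..s, a τ * w τ)
    (hsmall : ∫ s in r..t, a s ≤ 1 / 2) :
    w t ≤ 2 * w r := by
  obtain ⟨m, hm, hmax⟩ := isCompact_Icc.exists_isMaxOn (nonempty_Icc.2 hrt) hw
  have hsub : Icc r m ⊆ Icc r t := Icc_subset_Icc_right hm.2
  have hwm : 0 ≤ w m := hwr.trans (hmax (left_mem_Icc.2 hrt))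
  have hint : ∫ τ in r..m, a τ * w τ ≤ w m * ∫ s in r..t, a s :=
    calc ∫ τ in r..m, a τ * w τ ≤ ∫ τ in r..m, a τ * w m := by
          refine integral_mono_on hm.1 ?_ ?_ fun s hs ↦
            mul_le_mul_of_nonneg_left (hmax (hsub hs)) (ha0 s (hsub hs))
          · exact (ha.mul_continuousOn hw isCompact_Icc).intervalIntegrable_of_Icc_subset
              le_rfl hm.1 hm.2
          · exact IntegrableOn.intervalIntegrable_of_Icc_subset (ha.mul_const _) le_rfl hm.1 hm.2
      _ = w m * ∫ s in r..m, a s := by rw [intervalIntegral.integral_mul_const, mul_comm]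
      _ ≤ w m * ∫ s in r..t, a s := by
          refine mul_le_mul_of_nonneg_left (integral_mono_interval le_rfl hm.1 hm.2 ?_
            (ha.intervalIntegrable_of_Icc_subset le_rfl hrt le_rfl)) hwm
          exact ae_restrict_of_forall_mem measurableSet_Ioc fun s hs ↦
            ha0 s (Ioc_subset_Icc_self hs)
  have hwt : w t ≤ w m := hmax (right_mem_Icc.2 hrt)
  linarith [hgrowth m hm, mul_le_mul_of_nonneg_left hsmall hwm]

variable {T : ℝ}

-- Cut `[0, t]` where `∫ a` crosses `(n + 1) / 2`: induction up to there, one doubling after.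
lemma le_two_pow_mul_of_sub_le_integral_mul
    (hw : ContinuousOn w (Icc 0 T)) (hw0 : ∀ s ∈ Icc 0 T, 0 ≤ w s)
    (ha : IntegrableOn a (Icc 0 T)) (ha0 : ∀ s ∈ Icc 0 T, 0 ≤ a s)
    (hgrowth : ∀ r ∈ Icc 0 T, ∀ s ∈ Icc r T, w s - w r ≤ ∫ τ in r..s, a τ * w τ)
    (n : ℕ) {t : ℝ} (ht : t ∈ Icc 0 T) (hat : ∫ s in 0..t, a s ≤ (n + 1) / 2) :
    w t ≤ 2 ^ (n + 1) * w 0 := by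
  have hdouble : ∀ {r s}, 0 ≤ r → r ≤ s → s ≤ T → ∫ τ in r..s, a τ ≤ 1 / 2 → w s ≤ 2 * w r :=
    fun hr hrs hsT hsmall ↦
      have hsub : Icc _ _ ⊆ Icc 0 T := Icc_subset_Icc hr hsT
      le_two_mul_of_sub_le_integral_mul hrs (hw.mono hsub) (hw0 _ (hsub (left_mem_Icc.2 hrs)))
        (ha.mono_set hsub) (fun s hs ↦ ha0 s (hsub hs))
        (fun s hs ↦ hgrowth _ (hsub (left_mem_Icc.2 hrs)) s ⟨hs.1, hs.2.trans hsT⟩) hsmall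
  induction n generalizing t with
  | zero => simpa using hdouble le_rfl ht.1 ht.2 (by simpa using hat)
  | succ n ih =>
    have hw0' : 0 ≤ w 0 := hw0 0 (left_mem_Icc.2 (ht.1.trans ht.2))
    by_cases hlow : ∫ s in 0..t, a s ≤ (n + 1) / 2
    · calc w t ≤ 2 ^ (n + 1) * w 0 := ih ht hlow
        _ ≤ 2 ^ (n + 1 + 1) * w 0 := by gcongr <;> norm_num
    have hF : ContinuousOn (fun s ↦ ∫ τ in 0..s, a τ) (Icc 0 t) := by
      simpa [uIcc_of_le ht.1] using continuousOn_primitive_interval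
        ((ha.mono_set (Icc_subset_Icc_right ht.2)).mono_set (uIcc_of_le ht.1).subset)
    obtain ⟨m, hm, hFm⟩ := intermediate_value_Icc ht.1 hF
      ⟨by simp only [integral_same]; positivity, (not_le.1 hlow).le⟩
    have hmt : ∫ s in m..t, a s ≤ 1 / 2 := by
      rw [← integral_interval_sub_left (ha.intervalIntegrable_of_Icc_subset le_rfl ht.1 ht.2)
        (ha.intervalIntegrable_of_Icc_subset le_rfl hm.1 (hm.2.trans ht.2))]
      simp only at hFm
      push_cast at hat
      linarith
    calc w t ≤ 2 * w m := hdouble hm.1 hm.2 ht.2 hmt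
      _ ≤ 2 * (2 ^ (n + 1) * w 0) := by
          gcongr; exact ih ⟨hm.1, hm.2.trans ht.2⟩ hFm.le
      _ = 2 ^ (n + 1 + 1) * w 0 := by ring

lemma add_integral_le_of_sub_le_integral_mul_sub {q : ℝ → ℝ} {K : ℝ}
    (hw : ContinuousOn w (Icc 0 T)) (hw0 : ∀ s ∈ Icc 0 T, 0 ≤ w s)
    (ha : IntegrableOn a (Icc 0 T)) (ha0 : ∀ s ∈ Icc 0 T, 0 ≤ a s) (haK : ∫ s in 0..T, a s ≤ K)
    (hq : IntegrableOn q (Icc 0 T)) (hq0 : ∀ s ∈ Icc 0 T, 0 ≤ q s)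
    (henergy : ∀ r ∈ Icc 0 T, ∀ s ∈ Icc r T, w s - w r ≤ ∫ τ in r..s, (a τ * w τ - 2 * q τ))
    {t : ℝ} (ht : t ∈ Icc 0 T) :
    w t + ∫ s in 0..T, q s ≤ (2 + K) * 2 ^ (⌈2 * K⌉₊ + 1) * w 0 := by
  have hT : 0 ≤ T := ht.1.trans ht.2
  have haw : IntegrableOn (fun s ↦ a s * w s) (Icc 0 T) := ha.mul_continuousOn hw isCompact_Icc
  have hgrowth : ∀ r ∈ Icc 0 T, ∀ s ∈ Icc r T, w s - w r ≤ ∫ τ in r..s, a τ * w τ :=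
    fun r hr s hs ↦ (henergy r hr s hs).trans <| integral_mono_on hs.1
      ((haw.intervalIntegrable_of_Icc_subset hr.1 hs.1 hs.2).sub
        ((hq.intervalIntegrable_of_Icc_subset hr.1 hs.1 hs.2).const_mul 2))
      (haw.intervalIntegrable_of_Icc_subset hr.1 hs.1 hs.2)
      fun τ hτ ↦ by linarith [hq0 τ ⟨hr.1.trans hτ.1, hτ.2.trans hs.2⟩]
  have hK : 0 ≤ K := (integral_nonneg hT ha0).trans haK
  set W := 2 ^ (⌈2 * K⌉₊ + 1) * w 0
  have hbound : ∀ s ∈ Icc 0 T, w s ≤ W := fun s hs ↦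
    le_two_pow_mul_of_sub_le_integral_mul hw hw0 ha ha0 hgrowth _ hs <| by
      have : ∫ τ in 0..s, a τ ≤ ∫ τ in 0..T, a τ :=
        integral_mono_interval le_rfl hs.1 hs.2
          (ae_restrict_of_forall_mem measurableSet_Ioc fun τ hτ ↦ ha0 τ (Ioc_subset_Icc_self hτ))
          (ha.intervalIntegrable_of_Icc_subset le_rfl hT le_rfl)
      linarith [Nat.le_ceil (2 * K)]
  have hw0W : w 0 ≤ W := le_mul_of_one_le_left (hw0 0 (left_mem_Icc.2 hT)) (one_le_pow₀ one_le_two)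
  have hW0 : 0 ≤ W := (hw0 0 (left_mem_Icc.2 hT)).trans hw0W
  have haw_le : ∫ s in 0..T, a s * w s ≤ K * W :=
    calc ∫ s in 0..T, a s * w s ≤ ∫ s in 0..T, a s * W :=
          integral_mono_on hT (haw.intervalIntegrable_of_Icc_subset le_rfl hT le_rfl)
            ((ha.intervalIntegrable_of_Icc_subset le_rfl hT le_rfl).mul_const W)
            fun s hs ↦ mul_le_mul_of_nonneg_left (hbound s hs) (ha0 s hs)
      _ = (∫ s in 0..T, a s) * W := intervalIntegral.integral_mul_const _ _
      _ ≤ K * W := mul_le_mul_of_nonneg_right haK hW0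
  have hfinal := henergy 0 (left_mem_Icc.2 hT) T (right_mem_Icc.2 hT)
  rw [integral_sub (haw.intervalIntegrable_of_Icc_subset le_rfl hT le_rfl)
    ((hq.intervalIntegrable_of_Icc_subset le_rfl hT le_rfl).const_mul 2),
    intervalIntegral.integral_const_mul] at hfinal
  rw [mul_assoc]
  linarith [hbound t ht, hw0 T (right_mem_Icc.2 hT), mul_nonneg hK hW0]

end Gronwall

section Energy

variable {E : Type*} [NormedAddCommGroup E] [InnerProductSpace ℝ E]

lemma norm_sq_sub_norm_sq_le_integral {X X' : ℝ → E} {g : ℝ → ℝ} {r t : ℝ} (hrt : r ≤ t)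
    (hX : ∀ s ∈ Icc r t, HasDerivAt X (X' s) s) (hg : IntegrableOn g (Icc r t))
    (hXg : ∀ s ∈ Ioo r t, 2 * ⟪X s, X' s⟫ ≤ g s) :
    ‖X t‖ ^ 2 - ‖X r‖ ^ 2 ≤ ∫ s in r..t, g s :=
  sub_le_integral_of_hasDeriv_right_of_le hrt
    (fun s hs ↦ (hX s hs).norm_sq.continuousAt.continuousWithinAt)
    (fun s hs ↦ (hX s (Ioo_subset_Icc_self hs)).norm_sq.hasDerivWithinAt) hg hXg

lemma two_mul_inner_le_of_norm_le {y z : E} {C v : ℝ} (hC : 0 ≤ C)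
    (hy : ‖y‖ ≤ C * (1 + ‖z‖) * (1 + v)) :
    2 * ⟪z, y⟫ ≤ 8 * C * (1 + v ^ 2) * (1 + ‖z‖ ^ 2) := by
  have hz := norm_nonneg z
  have hpoly : (‖z‖ + ‖z‖ ^ 2) * (1 + v) ≤ 4 * (1 + ‖z‖ ^ 2) * (1 + v ^ 2) := by
    nlinarith [sq_nonneg (‖z‖ - 1), sq_nonneg (v - 1), sq_nonneg (‖z‖ * v - 1),
      sq_nonneg (‖z‖ - v)]
  calc 2 * ⟪z, y⟫ ≤ 2 * (‖z‖ * ‖y‖) := by gcongr; exact real_inner_le_norm z y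
    _ ≤ 2 * (‖z‖ * (C * (1 + ‖z‖) * (1 + v))) := by gcongr
    _ = 2 * C * ((‖z‖ + ‖z‖ ^ 2) * (1 + v)) := by ring
    _ ≤ 2 * C * (4 * (1 + ‖z‖ ^ 2) * (1 + v ^ 2)) := by gcongr
    _ = 8 * C * (1 + v ^ 2) * (1 + ‖z‖ ^ 2) := by ring

lemma two_mul_inner_drift_le {Vnorm : E → ℝ} {A B f : E → E} {σ : E → E →L[ℝ] E} {C : ℝ}
    (hC : 0 ≤ C) (hA : ∀ z, ⟪A z, z⟫ = -(Vnorm z) ^ 2) (hB : ∀ z, ⟪B z, z⟫ = 0)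
    (hf : ∀ z, ‖f z‖ ≤ C * (1 + ‖z‖)) (hσ : ∀ z, ‖σ z‖ ≤ C * (1 + ‖z‖)) (z v : E) :
    2 * ⟪z, A z + B z + f z + σ z v⟫ ≤ 8 * C * (1 + ‖v‖ ^ 2) * (1 + ‖z‖ ^ 2) - 2 * Vnorm z ^ 2 := by
  have hforce : ‖f z + σ z v‖ ≤ C * (1 + ‖z‖) * (1 + ‖v‖) :=
    calc ‖f z + σ z v‖ ≤ ‖f z‖ + ‖σ z‖ * ‖v‖ := norm_add_le_of_le le_rfl ((σ z).le_opNorm v)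
      _ ≤ C * (1 + ‖z‖) + C * (1 + ‖z‖) * ‖v‖ := by gcongr <;> simp [hf, hσ]
      _ = C * (1 + ‖z‖) * (1 + ‖v‖) := by ring
  have := two_mul_inner_le_of_norm_le hC hforce
  rw [add_assoc, inner_add_right, inner_add_right, real_inner_comm, hA,
    real_inner_comm, hB]
  linarith

end Energy

theorem stmt10_general
    {H : Type*} [NormedAddCommGroup H] [InnerProductSpace ℝ H]
    (T N : ℝ) (hT : 0 < T) (hN : 0 < N)
    (Vnorm : H → ℝ)
    (A B fbar : H → H) (σ : H → H →L[ℝ] H)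
    (C : ℝ) (hC : 0 < C)
    (hA : ∀ z, (inner ℝ (A z) z : ℝ) = -(Vnorm z)^2)
    (hB : ∀ z, (inner ℝ (B z) z : ℝ) = 0)
    (hfGrowth : ∀ z, ‖fbar z‖ ≤ C * (1 + ‖z‖))
    (hσ : ∀ z, ‖σ z‖ ≤ C * (1 + ‖z‖)) :
    ∃ C' > 0, ∀ (u : ℝ → H) (x : H) (X : ℝ → H),
      IntegrableOn (fun t => ‖u t‖^2) (Set.Icc 0 T) →
      (∫ t in (0:ℝ)..T, ‖u t‖^2) ≤ N →
      X 0 = x →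
      (∀ t ∈ Set.Icc (0:ℝ) T,
        HasDerivAt X (A (X t) + B (X t) + fbar (X t) + σ (X t) (u t)) t) →
      IntegrableOn (fun t => (Vnorm (X t))^2) (Set.Icc 0 T) →
      ∀ t ∈ Set.Icc (0:ℝ) T,
        ‖X t‖^2 + (∫ s in (0:ℝ)..T, (Vnorm (X s))^2) ≤ C' * (1 + ‖x‖^2) := by
  set K := 8 * C * (T + N)
  refine ⟨(2 + K) * 2 ^ (⌈2 * K⌉₊ + 1), by positivity, ?_⟩
  intro u x X hu huN hx0 hX hV t ht
  set a := fun s ↦ 8 * C * (1 + ‖u s‖ ^ 2)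
  set w := fun s ↦ 1 + ‖X s‖ ^ 2
  have hXc : ContinuousOn X (Icc 0 T) := fun s hs ↦ (hX s hs).continuousAt.continuousWithinAt
  have hw : ContinuousOn w (Icc 0 T) := continuousOn_const.add (hXc.norm.pow 2)
  have ha : IntegrableOn a (Icc 0 T) :=
    ((integrableOn_const measure_Icc_lt_top.ne).add hu).const_mul _
  have haK : ∫ s in 0..T, a s ≤ K := by
    simp only [a, K, intervalIntegral.integral_const_mul]
    rw [integral_add intervalIntegrable_const
      (hu.intervalIntegrable_of_Icc_subset le_rfl hT.le le_rfl)]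
    simp only [intervalIntegral.integral_const, sub_zero, smul_eq_mul, mul_one]
    gcongr
  have henergy : ∀ r ∈ Icc 0 T, ∀ s ∈ Icc r T,
      w s - w r ≤ ∫ τ in r..s, (a τ * w τ - 2 * Vnorm (X τ) ^ 2) := fun r hr s hs ↦ by
    have hsub : Icc r s ⊆ Icc 0 T := Icc_subset_Icc hr.1 hs.2
    simpa only [w, add_sub_add_left_eq_sub, Pi.sub_apply] using
      norm_sq_sub_norm_sq_le_integral hs.1 (fun τ hτ ↦ hX τ (hsub hτ))
      (((ha.mul_continuousOn hw isCompact_Icc).sub (hV.const_mul 2)).mono_set hsub)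
      fun τ _ ↦ two_mul_inner_drift_le hC.le hA hB hfGrowth hσ (X τ) (u τ)
  have hbound := add_integral_le_of_sub_le_integral_mul_sub hw (fun _ _ ↦ by positivity) ha
    (fun _ _ ↦ by positivity) haK hV (fun _ _ ↦ sq_nonneg _) henergy ht
  simp only [w, hx0] at hbound
  linarith

/-- A priori energy estimate for the skeleton equation
`dX̄ = [A X̄ + B(X̄) + f̄(X̄) + σ₁(X̄)Q₁^{1/2} u(t)] dt`, `X̄₀ = x`, in the abstract Gelfand
setting: `H` a Hilbert space (playing `L²(0,1)`), `Vnorm z` the `H¹₀`-norm of `z`,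
`⟪A z, z⟫ = -(Vnorm z)²` (Dirichlet Laplacian), `⟪B z, z⟫ = 0` (Burgers cancellation),
`f̄` Lipschitz with linear growth, `‖σ z‖ ≤ C(1 + ‖z‖)` (the HS bound on `σ₁(z)Q₁^{1/2}`),
and a control `u` with `∫₀ᵀ ‖u‖² ≤ N`. Conclusion: there is `C_{N,T}` with
`sup_{t∈[0,T]} ‖X̄_t‖² + ∫₀ᵀ (Vnorm X̄_s)² ds ≤ C_{N,T} (1 + ‖x‖²)`. -/
theorem stmt10
    {H : Type*} [NormedAddCommGroup H] [InnerProductSpace ℝ H] [CompleteSpace H]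
    (T N : ℝ) (hT : 0 < T) (hN : 0 < N)
    (Vnorm : H → ℝ) (hV : ∀ z, 0 ≤ Vnorm z)
    (A B fbar : H → H) (σ : H → H →L[ℝ] H)
    (C : ℝ) (hC : 0 < C)
    (hA : ∀ z, (inner ℝ (A z) z : ℝ) = -(Vnorm z)^2)
    (hB : ∀ z, (inner ℝ (B z) z : ℝ) = 0)
    (hfLip : LipschitzWith (Real.toNNReal C) fbar)
    (hfGrowth : ∀ z, ‖fbar z‖ ≤ C * (1 + ‖z‖))
    (hσ : ∀ z, ‖σ z‖ ≤ C * (1 + ‖z‖)) :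
    ∃ C' > 0, ∀ (u : ℝ → H) (x : H) (X : ℝ → H),
      IntegrableOn (fun t => ‖u t‖^2) (Set.Icc 0 T) →
      (∫ t in (0:ℝ)..T, ‖u t‖^2) ≤ N →
      X 0 = x →
      (∀ t ∈ Set.Icc (0:ℝ) T,
        HasDerivAt X (A (X t) + B (X t) + fbar (X t) + σ (X t) (u t)) t) →
      IntegrableOn (fun t => (Vnorm (X t))^2) (Set.Icc 0 T) →
      ∀ t ∈ Set.Icc (0:ℝ) T,
        ‖X t‖^2 + (∫ s in (0:ℝ)..T, (Vnorm (X s))^2) ≤ C' * (1 + ‖x‖^2) :=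
  stmt10_general T N hT hN Vnorm A B fbar σ C hC hA hB hfGrowth hσ
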